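/- In the tabular softmax trajectory model, fix logits z : 𝒮 × 𝒜 → ℝ, a direction v : 𝒮 × 𝒜 → ℝ, and a nonempty event E ⊆ 𝒜^T. Then, as η → 0, E_{P_{z+ηv}}[ℓ_{z+ηv} − ℓ_z | E] = −η·E_{P_z}[(1/T)·Ψ_{z,v} | E] + O(η²). -/

import Mathlib

open Finset Filter Asymptotics

noncomputable section

/-- Softmax policy: probability of action `a` in state `s` under logits `z`. -/
def pol {S A : Type*} [Fintype A] (z : S × A → ℝ) (s : S) (a : A) : ℝ :=
  Real.exp (z (s, a)) / ∑ b : A, Real.exp (z (s, b))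

/-- State reached after `n` steps of the deterministic dynamics `δ` from `s0`,
taking actions `y 0, y 1, …`. -/
def stateAt {S A : Type*} (δ : S → A → S) (s0 : S) (y : ℕ → A) : ℕ → S
  | 0 => s0
  | n + 1 => δ (stateAt δ s0 y n) (y n)

/-- State `s_t(y)` from which the `t`-th action of the trajectory `y` is taken. -/
def st {S A : Type*} (δ : S → A → S) (s0 : S) {T : ℕ} (y : Fin T → A) (t : Fin T) : S :=
  stateAt δ s0 (fun n => if h : n < T then y ⟨n, h⟩ else y t) t.val

/-- Trajectory probability `P_z(y) = ∏_t π_z(a_t | s_t(y))`. -/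
def traj {S A : Type*} [Fintype A] (δ : S → A → S) (s0 : S) {T : ℕ}
    (z : S × A → ℝ) (y : Fin T → A) : ℝ :=
  ∏ t : Fin T, pol z (st δ s0 y t) (y t)

/-- Per-token negative log-likelihood `ℓ_z(y)`. -/
def nll {S A : Type*} [Fintype A] (δ : S → A → S) (s0 : S) {T : ℕ}
    (z : S × A → ℝ) (y : Fin T → A) : ℝ :=
  -(1 / (T : ℝ)) * ∑ t : Fin T, Real.log (pol z (st δ s0 y t) (y t))

/-- Centered direction `ṽ_z(s,a) = v(s,a) − ∑_b π_z(b|s) v(s,b)`. -/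
def centered {S A : Type*} [Fintype A] (z v : S × A → ℝ) (s : S) (a : A) : ℝ :=
  v (s, a) - ∑ b : A, pol z s b * v (s, b)

/-- Trajectory score `Ψ_{z,v}(y) = ∑_t ṽ_z(s_t(y), a_t)`. -/
def score {S A : Type*} [Fintype A] (δ : S → A → S) (s0 : S) {T : ℕ}
    (z v : S × A → ℝ) (y : Fin T → A) : ℝ :=
  ∑ t : Fin T, centered z v (st δ s0 y t) (y t)

/-- Conditional expectation `E_{P_z}[f | E]`. -/
def condExp {S A : Type*} [Fintype A] (δ : S → A → S) (s0 : S) {T : ℕ}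
    (z : S × A → ℝ) (E : Finset (Fin T → A)) (f : (Fin T → A) → ℝ) : ℝ :=
  (∑ y ∈ E, traj δ s0 z y * f y) / ∑ y ∈ E, traj δ s0 z y

/-- Conditional covariance `Cov_{P_z(·|E)}(f, g)`. -/
def condCov {S A : Type*} [Fintype A] (δ : S → A → S) (s0 : S) {T : ℕ}
    (z : S × A → ℝ) (E : Finset (Fin T → A)) (f g : (Fin T → A) → ℝ) : ℝ :=
  condExp δ s0 z E (fun y => f y * g y) - condExp δ s0 z E f * condExp δ s0 z E g

/-! The map `η ↦ F η := E_{P_{z+ηv}}[ℓ_{z+ηv} − ℓ_z | E]` is a ratio of finite sums of real-analytic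
functions of `η`, hence analytic at `0`, so it agrees with its first-order Taylor polynomial up to
`O(η²)`. Since the integrand vanishes at `η = 0`, we have `F 0 = 0` and the derivative of the tilted
weights does not contribute to `F' 0`; what remains is the conditional mean of `d/dη ℓ_{z+ηv}`,
which is `−Ψ_{z,v}/T` because `d/dη log π_{z+ηv}(a | s) = ṽ_z(s, a)`. -/

open Topology

theorem AnalyticAt.isBigO_sub_sub_smul_deriv {𝕜 E : Type*} [NontriviallyNormedField 𝕜]
    [NormedAddCommGroup E] [NormedSpace 𝕜 E] {f : 𝕜 → E} {x : 𝕜} {f' : E}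
    (hf : AnalyticAt 𝕜 f x) (hf' : HasDerivAt f f' x) :
    (fun h => f (x + h) - f x - h • f') =O[𝓝 0] fun h => h ^ 2 := by
  obtain ⟨p, hp⟩ := hf
  have hcoeff : p.coeff 1 = f' := hp.hasDerivAt.unique hf'
  have hcoeff₀ : p.coeff 0 = f x := hp.coeff_zero _
  have hpartial (h : 𝕜) : p.partialSum 2 h = f x + h • f' := by
    simp [FormalMultilinearSeries.partialSum, sum_range_succ, hcoeff₀, hcoeff]
  have h := hp.isBigO_sub_partialSum_pow 2
  simp only [hpartial, ← norm_pow, isBigO_norm_right] at h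
  simpa only [sub_sub] using h

theorem hasDerivAt_sum_mul_div_sum_of_eq_zero {ι 𝕜 : Type*} [NontriviallyNormedField 𝕜]
    (E : Finset ι) {w f : ι → 𝕜 → 𝕜} {f' : ι → 𝕜} {x : 𝕜}
    (hw : ∀ i ∈ E, DifferentiableAt 𝕜 (w i) x) (hf : ∀ i ∈ E, HasDerivAt (f i) (f' i) x)
    (hf0 : ∀ i ∈ E, f i x = 0) (hden : ∑ i ∈ E, w i x ≠ 0) :
    HasDerivAt (fun η => (∑ i ∈ E, w i η * f i η) / ∑ i ∈ E, w i η)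
      ((∑ i ∈ E, w i x * f' i) / ∑ i ∈ E, w i x) x := by
  have hnum : HasDerivAt (fun η => ∑ i ∈ E, w i η * f i η) (∑ i ∈ E, w i x * f' i) x := by
    refine HasDerivAt.fun_sum fun i hi => ?_
    simpa [hf0 i hi] using (hw i hi).hasDerivAt.fun_mul (hf i hi)
  have hnum0 : ∑ i ∈ E, w i x * f i x = 0 := sum_eq_zero fun i hi => by simp [hf0 i hi]
  refine (hnum.fun_div (HasDerivAt.fun_sum fun i hi => (hw i hi).hasDerivAt) hden).congr_deriv ?_
  rw [hnum0]
  field_simp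
  ring

section Softmax

variable {S A : Type*} [Fintype A]

lemma sum_pol_mul (z v : S × A → ℝ) (s : S) :
    ∑ b, pol z s b * v (s, b) = (∑ b, Real.exp (z (s, b)) * v (s, b)) / ∑ b, Real.exp (z (s, b)) := by
  rw [sum_div]
  exact sum_congr rfl fun b _ => by rw [pol]; ring

variable [Nonempty A]

lemma sum_exp_pos (f : A → ℝ) : 0 < ∑ b, Real.exp (f b) :=
  sum_pos (fun _ _ => Real.exp_pos _) univ_nonempty

lemma pol_pos (z : S × A → ℝ) (s : S) (a : A) : 0 < pol z s a :=
  div_pos (Real.exp_pos _) (sum_exp_pos _)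

lemma traj_pos (δ : S → A → S) (s0 : S) {T : ℕ} (z : S × A → ℝ) (y : Fin T → A) :
    0 < traj δ s0 z y :=
  prod_pos fun _ _ => pol_pos z _ _

lemma traj_eq_exp_sum_log (δ : S → A → S) (s0 : S) {T : ℕ} (z : S × A → ℝ) (y : Fin T → A) :
    traj δ s0 z y = Real.exp (∑ t, Real.log (pol z (st δ s0 y t) (y t))) := by
  rw [Real.exp_sum]
  exact prod_congr rfl fun t _ => (Real.exp_log (pol_pos _ _ _)).symm

lemma log_pol (z : S × A → ℝ) (s : S) (a : A) :
    Real.log (pol z s a) = z (s, a) - Real.log (∑ b, Real.exp (z (s, b))) := by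
  rw [pol, Real.log_div (Real.exp_pos _).ne' (sum_exp_pos _).ne', Real.log_exp]

variable (z v : S × A → ℝ)

lemma log_pol_add_smul (s : S) (a : A) :
    (fun η : ℝ => Real.log (pol (z + η • v) s a)) =
      fun η => z (s, a) + η * v (s, a) - Real.log (∑ b, Real.exp (z (s, b) + η * v (s, b))) := by
  funext η
  simp [log_pol]

lemma analyticAt_log_pol_add_smul (s : S) (a : A) (x : ℝ) :
    AnalyticAt ℝ (fun η : ℝ => Real.log (pol (z + η • v) s a)) x := by
  rw [log_pol_add_smul]
  fun_prop (disch := exact sum_exp_pos _)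

lemma hasDerivAt_log_pol_add_smul (s : S) (a : A) :
    HasDerivAt (fun η : ℝ => Real.log (pol (z + η • v) s a)) (centered z v s a) 0 := by
  rw [log_pol_add_smul]
  have hexp (b : A) : HasDerivAt (fun η : ℝ => Real.exp (z (s, b) + η * v (s, b)))
      (Real.exp (z (s, b)) * v (s, b)) 0 := by
    simpa using (((hasDerivAt_id (0 : ℝ)).mul_const (v (s, b))).const_add (z (s, b))).exp
  have hlin : HasDerivAt (fun η : ℝ => z (s, a) + η * v (s, a)) (v (s, a)) 0 := by
    simpa using ((hasDerivAt_id (0 : ℝ)).mul_const (v (s, a))).const_add (z (s, a))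
  have hlog := (HasDerivAt.fun_sum fun b _ => hexp b).log
    (by simpa using (sum_exp_pos _).ne')
  refine (hlin.sub hlog).congr_deriv ?_
  simp [centered, sum_pol_mul]

variable (δ : S → A → S) (s0 : S) {T : ℕ} (y : Fin T → A)

lemma analyticAt_traj_add_smul (x : ℝ) :
    AnalyticAt ℝ (fun η : ℝ => traj δ s0 (z + η • v) y) x := by
  simp only [traj_eq_exp_sum_log]
  exact (analyticAt_fun_sum _ fun _ _ => analyticAt_log_pol_add_smul z v _ _ x).rexp

lemma analyticAt_nll_add_smul (x : ℝ) :
    AnalyticAt ℝ (fun η : ℝ => nll δ s0 (z + η • v) y) x :=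
  analyticAt_const.mul (analyticAt_fun_sum _ fun _ _ => analyticAt_log_pol_add_smul z v _ _ x)

lemma hasDerivAt_nll_add_smul :
    HasDerivAt (fun η : ℝ => nll δ s0 (z + η • v) y) (-(1 / (T : ℝ)) * score δ s0 z v y) 0 :=
  (HasDerivAt.fun_sum fun _ _ => hasDerivAt_log_pol_add_smul z v _ _).const_mul _

end Softmax

theorem stmt_9_general {S A : Type*} [Fintype A] [Nonempty A]
    (δ : S → A → S) (s0 : S) (T : ℕ)
    (z v : S × A → ℝ) (E : Finset (Fin T → A)) (hE : E.Nonempty) :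
    (fun η : ℝ =>
        condExp δ s0 (z + η • v) E
          (fun y => nll δ s0 (z + η • v) y - nll δ s0 z y)
        + η * condExp δ s0 z E (fun y => (1 / (T : ℝ)) * score δ s0 z v y))
      =O[nhds (0 : ℝ)] (fun η : ℝ => η ^ 2) := by
  set K := condExp δ s0 z E (fun y => (1 / (T : ℝ)) * score δ s0 z v y)
  have hden : ∑ y ∈ E, traj δ s0 z y ≠ 0 := (sum_pos (fun y _ => traj_pos δ s0 z y) hE).ne'
  have hderiv : HasDerivAt (fun η : ℝ => condExp δ s0 (z + η • v) E
      (fun y => nll δ s0 (z + η • v) y - nll δ s0 z y)) (-K) 0 := by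
    refine (hasDerivAt_sum_mul_div_sum_of_eq_zero E
      (fun y _ => (analyticAt_traj_add_smul z v δ s0 y 0).differentiableAt)
      (fun y _ => (hasDerivAt_nll_add_smul z v δ s0 y).sub_const (nll δ s0 z y))
      (fun y _ => by simp) (by simpa using hden)).congr_deriv ?_
    simp only [K, condExp, zero_smul, add_zero, ← neg_div, ← sum_neg_distrib]
    congr 1
    exact sum_congr rfl fun _ _ => by ring
  have hanalytic : AnalyticAt ℝ (fun η : ℝ => condExp δ s0 (z + η • v) E
      (fun y => nll δ s0 (z + η • v) y - nll δ s0 z y)) 0 := by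
    refine AnalyticAt.div ?_ ?_ (by simpa using hden)
    · exact analyticAt_fun_sum _ fun y _ => (analyticAt_traj_add_smul z v δ s0 y 0).mul
        ((analyticAt_nll_add_smul z v δ s0 y 0).sub analyticAt_const)
    · exact analyticAt_fun_sum _ fun y _ => analyticAt_traj_add_smul z v δ s0 y 0
  simpa [condExp, sub_eq_add_neg] using hanalytic.isBigO_sub_sub_smul_deriv hderiv

/-- Term (A): as `η → 0`,
`E_{P_{z+ηv}}[ℓ_{z+ηv} − ℓ_z | E] = −η·E_{P_z}[(1/T)·Ψ_{z,v} | E] + O(η²)`. -/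
theorem stmt_9 {S A : Type*} [Fintype S] [Fintype A] [Nonempty A]
    (δ : S → A → S) (s0 : S) (T : ℕ) (hT : 1 ≤ T)
    (z v : S × A → ℝ) (E : Finset (Fin T → A)) (hE : E.Nonempty) :
    (fun η : ℝ =>
        condExp δ s0 (z + η • v) E
          (fun y => nll δ s0 (z + η • v) y - nll δ s0 z y)
        + η * condExp δ s0 z E (fun y => (1 / (T : ℝ)) * score δ s0 z v y))
      =O[nhds (0 : ℝ)] (fun η : ℝ => η ^ 2) :=
  stmt_9_general δ s0 T z v E hE
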